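/- (Lemma A4.1, part (a)) Let c_r = (7/12)·2^{−r}. If |t|^{r−2} E|ξ_s|^r ≤ c_r E ξ_s², E ξ_s η_s = 0, and E|η_s|^r ≤ c_r E η_s², then 1 − |E exp{i(tξ + η)}|² ≥ (1/6)(t² E ξ_s² + E η_s²). -/

import Mathlib

open MeasureTheory ProbabilityTheory
open scoped NNReal

noncomputable section

section AuxLemmas

private lemma aux_sin_lb {x : ℝ} (hx0 : 0 ≤ x) (hx1 : x ≤ 1) : 3/4 * x ≤ Real.sin x := by
  rcases eq_or_lt_of_le hx0 with h | h
  · simp [← h]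
  · have h3 := Real.sin_gt_sub_cube h
    have hx2 : x^2 ≤ 1 := by nlinarith
    have hx3 : x^3 ≤ x := by nlinarith
    linarith

private lemma aux_cos_lb {z : ℝ} (hz : |z| ≤ 2) : 9/32 * z^2 ≤ 1 - Real.cos z := by
  have hid : 1 - Real.cos z = 2 * Real.sin (z/2) ^ 2 := by
    have h1 := Real.cos_two_mul (z/2)
    have h2 := Real.sin_sq_add_cos_sq (z/2)
    have h3 : 2 * (z/2) = z := by ring
    rw [h3] at h1
    nlinarith
  have hsq : Real.sin (z/2) ^ 2 = Real.sin (|z|/2) ^ 2 := by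
    rcases abs_cases z with ⟨h, _⟩ | ⟨h, _⟩
    · rw [h]
    · rw [h]; rw [show -z/2 = -(z/2) by ring, Real.sin_neg]; ring
  have hx0 : (0:ℝ) ≤ |z|/2 := by positivity
  have hx1 : |z|/2 ≤ 1 := by linarith
  have hs := aux_sin_lb hx0 hx1
  have habs : |z|^2 = z^2 := sq_abs z
  nlinarith [sq_nonneg (Real.sin (|z|/2) - 3/4*(|z|/2))]

/-- The key pointwise inequality `1 - cos z ≥ (9/32) z² - (9/32) 2^{2-r} |z|^r`. -/
private lemma aux_pointwise {r : ℝ} (hr : 2 < r) (z : ℝ) :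
    9/32 * z^2 - 9/32 * (2:ℝ)^(2-r) * |z|^r ≤ 1 - Real.cos z := by
  rcases le_or_gt |z| 2 with h | h
  · have h1 := aux_cos_lb h
    have h2 : (0:ℝ) ≤ (2:ℝ)^(2-r) * |z|^r := by positivity
    nlinarith
  · have hc : Real.cos z ≤ 1 := Real.cos_le_one z
    have hz0 : (0:ℝ) < |z| := lt_trans two_pos h
    have key : z^2 ≤ (2:ℝ)^(2-r) * |z|^r := by
      have e1 : |z|^r = |z|^(r-2) * z^2 := by
        rw [show r = (r-2) + 2 by ring, Real.rpow_add hz0]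
        rw [show ((r-2:ℝ)+2-2) = r - 2 by ring, Real.rpow_two, sq_abs]
      have e2 : (2:ℝ)^(r-2) ≤ |z|^(r-2) :=
        Real.rpow_le_rpow (by norm_num) h.le (by linarith)
      have e3 : (2:ℝ)^(2-r) * (2:ℝ)^(r-2) = 1 := by
        rw [← Real.rpow_add two_pos]; norm_num
      have h4 : (0:ℝ) < (2:ℝ)^(2-r) := by positivity
      calc z^2 = ((2:ℝ)^(2-r) * (2:ℝ)^(r-2)) * z^2 := by rw [e3]; ring
        _ ≤ ((2:ℝ)^(2-r) * |z|^(r-2)) * z^2 :=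
              mul_le_mul_of_nonneg_right (mul_le_mul_of_nonneg_left e2 h4.le) (sq_nonneg z)
        _ = (2:ℝ)^(2-r) * |z|^r := by rw [e1]; ring
    nlinarith

private lemma aux_add_rpow {p : ℝ} (hp : 1 ≤ p) {a b : ℝ} (ha : 0 ≤ a) (hb : 0 ≤ b) :
    (a+b)^p ≤ 2^(p-1) * (a^p + b^p) := by
  have h := NNReal.rpow_add_le_mul_rpow_add_rpow a.toNNReal b.toNNReal hp
  have h2 := NNReal.coe_le_coe.2 h
  simpa [NNReal.coe_rpow, Real.coe_toNNReal _ ha, Real.coe_toNNReal _ hb] using h2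

private lemma aux_sq_le (r : ℝ) (hr : 2 ≤ r) (x : ℝ) : x^2 ≤ 1 + |x|^r := by
  rcases le_or_gt |x| 1 with h | h
  · have h1 : x^2 ≤ 1 := by nlinarith [sq_abs x, abs_nonneg x]
    have h2 : (0:ℝ) ≤ |x|^r := Real.rpow_nonneg (abs_nonneg x) r
    linarith
  · have h2 : |x|^(2:ℝ) ≤ |x|^r := Real.rpow_le_rpow_of_exponent_le h.le hr
    rw [Real.rpow_two, sq_abs] at h2
    linarith

private lemma aux_exp_re (x : ℝ) : (Complex.exp (Complex.I * (x:ℂ))).re = Real.cos x := by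
  rw [mul_comm, Complex.exp_mul_I]
  simp [Complex.cos_ofReal_re]

private lemma aux_abs_split {r : ℝ} (hr : 2 < r) (t : ℝ) : |t|^r = t^2 * |t|^(r-2) := by
  rcases eq_or_ne t 0 with rfl | ht
  · rw [abs_zero, Real.zero_rpow (by linarith)]; ring
  · rw [show r = 2 + (r-2) by ring, Real.rpow_add (abs_pos.2 ht)]
    rw [show (2:ℝ) + (r-2) - 2 = r - 2 by ring, Real.rpow_two, sq_abs]

end AuxLemmas

set_option maxHeartbeats 1000000 in
/-- Lemma A4.1, part (a): for i.i.d. `(ξ,η)`, `(ξ',η')` with symmetrizations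
`ξ_s = ξ - ξ'`, `η_s = η - η'`, if `|t|^{r-2} E|ξ_s|^r ≤ c_r E ξ_s²`,
`E ξ_s η_s = 0` and `E|η_s|^r ≤ c_r E η_s²` with `c_r = (7/12)2^{-r}`, then
`1 - |E exp{i(tξ+η)}|² ≥ (1/6)(t² E ξ_s² + E η_s²)`. -/
theorem symmetrization_char_function_lower_bound
    {Ω : Type*} [MeasurableSpace Ω] (μ : Measure Ω) [IsProbabilityMeasure μ]
    (W W' : Ω → ℝ × ℝ) (hW : Measurable W) (hW' : Measurable W')
    (hindep : IndepFun W W' μ)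
    (hid : IdentDistrib W W' μ μ)
    (r : ℝ) (hr : 2 < r)
    (hmom : Integrable (fun ω => |(W ω).1| ^ r + |(W ω).2| ^ r) μ)
    (ξs ηs : Ω → ℝ)
    (hξs : ξs = fun ω => (W ω).1 - (W' ω).1)
    (hηs : ηs = fun ω => (W ω).2 - (W' ω).2)
    (t : ℝ)
    (h1 : |t| ^ (r - 2) * ∫ ω, |ξs ω| ^ r ∂μ
        ≤ (7 / 12) * (2 : ℝ) ^ (-r) * ∫ ω, (ξs ω) ^ 2 ∂μ)
    (h2 : (∫ ω, ξs ω * ηs ω ∂μ) = 0)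
    (h3 : (∫ ω, |ηs ω| ^ r ∂μ)
        ≤ (7 / 12) * (2 : ℝ) ^ (-r) * ∫ ω, (ηs ω) ^ 2 ∂μ) :
    (1 / 6) * (t ^ 2 * (∫ ω, (ξs ω) ^ 2 ∂μ) + ∫ ω, (ηs ω) ^ 2 ∂μ)
      ≤ 1 - (‖(∫ ω, Complex.exp
          (Complex.I * ((t * (W ω).1 + (W ω).2 : ℝ) : ℂ)) ∂μ)‖) ^ 2 := by
  -- preliminaries
  have hr0 : (0:ℝ) ≤ r := by linarith
  have hr1 : (1:ℝ) ≤ r := by linarith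
  have habs : Continuous (fun x : ℝ => |x| ^ r) :=
    (Real.continuous_rpow_const hr0).comp continuous_abs
  have hξsm : Measurable ξs := by rw [hξs]; exact hW.fst.sub hW'.fst
  have hηsm : Measurable ηs := by rw [hηs]; exact hW.snd.sub hW'.snd
  -- the characteristic function setup
  set g : ℝ × ℝ → ℝ := fun p => t * p.1 + p.2 with hg
  set F : ℝ × ℝ → ℂ := fun p => Complex.exp (Complex.I * (g p : ℂ)) with hF
  set Fc : ℝ × ℝ → ℂ := fun p => Complex.exp (-(Complex.I * (g p : ℂ))) with hFc
  set Z : Ω → ℝ := fun ω => t * ξs ω + ηs ω with hZ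
  have hgc : Continuous g := by fun_prop
  have hFcont : Continuous F :=
    Complex.continuous_exp.comp (continuous_const.mul (Complex.continuous_ofReal.comp hgc))
  have hFccont : Continuous Fc :=
    Complex.continuous_exp.comp (continuous_const.mul (Complex.continuous_ofReal.comp hgc)).neg
  have hZm : Measurable Z := (hξsm.const_mul t).add hηsm
  have hZg : Z = fun ω => g (W ω) - g (W' ω) := by
    funext ω; simp only [hZ, hg, hξs, hηs]; ring
  set φ : ℂ := ∫ ω, F (W ω) ∂μ with hφ
  haveI : IsProbabilityMeasure (μ.map W) := Measure.isProbabilityMeasure_map hW.aemeasurable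
  haveI : IsProbabilityMeasure (μ.map W') := Measure.isProbabilityMeasure_map hW'.aemeasurable
  -- Step 1 : |φ|² = ∫ cos Z
  have step1 : ‖φ‖ ^ 2 = ∫ ω, Real.cos (Z ω) ∂μ := by
    have hconj : ∀ p, (starRingEnd ℂ) (F p) = Fc p := by
      intro p
      rw [hF, hFc, ← Complex.exp_conj]
      congr 1
      simp
    have hcphi : (starRingEnd ℂ) φ = ∫ ω, Fc (W' ω) ∂μ := by
      rw [hφ, ← integral_conj]
      have e : ∫ ω, (starRingEnd ℂ) (F (W ω)) ∂μ = ∫ ω, Fc (W ω) ∂μ := by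
        congr 1; funext ω; rw [hconj]
      rw [e]
      exact (hid.comp hFccont.measurable).integral_eq
    have hmap : μ.map (fun ω => (W ω, W' ω)) = (μ.map W).prod (μ.map W') :=
      (indepFun_iff_map_prod_eq_prod_map_map hW.aemeasurable hW'.aemeasurable).1 hindep
    have key : ∫ ω, F (W ω) * Fc (W' ω) ∂μ = φ * (starRingEnd ℂ) φ := by
      have e1 : ∫ ω, F (W ω) * Fc (W' ω) ∂μ
          = ∫ p, F p.1 * Fc p.2 ∂(μ.map fun ω => (W ω, W' ω)) :=
        (integral_map (hW.prodMk hW').aemeasurable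
          ((hFcont.comp continuous_fst).mul (hFccont.comp continuous_snd)).aestronglyMeasurable).symm
      rw [e1, hmap, integral_prod_mul,
        integral_map hW.aemeasurable hFcont.aestronglyMeasurable,
        integral_map hW'.aemeasurable hFccont.aestronglyMeasurable, hcphi, hφ]
    have hprod : ∀ ω, F (W ω) * Fc (W' ω) = Complex.exp (Complex.I * (Z ω : ℂ)) := by
      intro ω
      rw [hF, hFc, hZg, ← Complex.exp_add]
      congr 1
      push_cast
      ring
    have hint : Integrable (fun ω => Complex.exp (Complex.I * (Z ω : ℂ))) μ := by
      apply Integrable.mono' (integrable_const 1)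
      · exact (Complex.continuous_exp.measurable.comp
          ((Complex.measurable_ofReal.comp hZm).const_mul Complex.I)).aestronglyMeasurable
      · filter_upwards with ω
        rw [Complex.norm_exp]
        simp
    have main : ((‖φ‖ ^ 2 : ℝ) : ℂ) = ∫ ω, Complex.exp (Complex.I * (Z ω : ℂ)) ∂μ := by
      rw [Complex.sq_norm, ← Complex.mul_conj, ← key]
      congr 1; funext ω; rw [hprod]
    have hre := congrArg Complex.re main
    rw [Complex.ofReal_re] at hre
    have e := integral_re hint
    simp only [RCLike.re_to_complex] at e
    rw [hre, ← e]
    congr 1; funext ω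
    rw [aux_exp_re]
  -- Step 2 : 1 - |φ|² = ∫ (1 - cos Z)
  have icos : Integrable (fun ω => Real.cos (Z ω)) μ := by
    apply Integrable.mono' (integrable_const 1)
      (Real.continuous_cos.measurable.comp hZm).aestronglyMeasurable
    filter_upwards with ω
    rw [Real.norm_eq_abs]
    exact Real.abs_cos_le_one _
  have step2 : 1 - ‖φ‖ ^ 2 = ∫ ω, (1 - Real.cos (Z ω)) ∂μ := by
    rw [step1, integral_sub (integrable_const 1) icos, integral_const]
    simp
  -- Step 3 : integrability of moments
  have iξr : Integrable (fun ω => |(W ω).1| ^ r) μ := by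
    apply hmom.mono' ((habs.measurable.comp measurable_fst).comp hW).aestronglyMeasurable
    filter_upwards with ω
    simp only [Function.comp_apply, Real.norm_eq_abs]
    rw [abs_of_nonneg (Real.rpow_nonneg (abs_nonneg _) _)]
    have : (0:ℝ) ≤ |(W ω).2| ^ r := Real.rpow_nonneg (abs_nonneg _) _
    linarith
  have iηr : Integrable (fun ω => |(W ω).2| ^ r) μ := by
    apply hmom.mono' ((habs.measurable.comp measurable_snd).comp hW).aestronglyMeasurable
    filter_upwards with ω
    simp only [Function.comp_apply, Real.norm_eq_abs]
    rw [abs_of_nonneg (Real.rpow_nonneg (abs_nonneg _) _)]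
    have : (0:ℝ) ≤ |(W ω).1| ^ r := Real.rpow_nonneg (abs_nonneg _) _
    linarith
  have iξ'r : Integrable (fun ω => |(W' ω).1| ^ r) μ :=
    ((hid.comp (habs.measurable.comp measurable_fst)).integrable_iff).1 iξr
  have iη'r : Integrable (fun ω => |(W' ω).2| ^ r) μ :=
    ((hid.comp (habs.measurable.comp measurable_snd)).integrable_iff).1 iηr
  have key2 : ∀ (a b : ℝ), |a - b| ^ r ≤ 2^(r-1) * (|a|^r + |b|^r) := by
    intro a b
    calc |a - b| ^ r ≤ (|a| + |b|) ^ r :=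
          Real.rpow_le_rpow (abs_nonneg _) (abs_sub _ b) hr0
      _ ≤ 2^(r-1) * (|a|^r + |b|^r) := aux_add_rpow hr1 (abs_nonneg _) (abs_nonneg _)
  have iξsr : Integrable (fun ω => |ξs ω| ^ r) μ := by
    apply Integrable.mono' (((iξr.add iξ'r).const_mul (2^(r-1))))
      (habs.measurable.comp hξsm).aestronglyMeasurable
    filter_upwards with ω
    simp only [Function.comp_apply, Pi.add_apply, Real.norm_eq_abs]
    rw [abs_of_nonneg (Real.rpow_nonneg (abs_nonneg _) _), hξs]
    exact key2 _ _
  have iηsr : Integrable (fun ω => |ηs ω| ^ r) μ := by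
    apply Integrable.mono' (((iηr.add iη'r).const_mul (2^(r-1))))
      (habs.measurable.comp hηsm).aestronglyMeasurable
    filter_upwards with ω
    simp only [Function.comp_apply, Pi.add_apply, Real.norm_eq_abs]
    rw [abs_of_nonneg (Real.rpow_nonneg (abs_nonneg _) _), hηs]
    exact key2 _ _
  have iξs2 : Integrable (fun ω => (ξs ω) ^ 2) μ := by
    apply Integrable.mono' ((integrable_const 1).add iξsr)
      ((hξsm.pow_const 2).aestronglyMeasurable)
    filter_upwards with ω
    simp only [Pi.add_apply, Real.norm_eq_abs]
    rw [abs_of_nonneg (sq_nonneg _)]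
    exact aux_sq_le r hr.le _
  have iηs2 : Integrable (fun ω => (ηs ω) ^ 2) μ := by
    apply Integrable.mono' ((integrable_const 1).add iηsr)
      ((hηsm.pow_const 2).aestronglyMeasurable)
    filter_upwards with ω
    simp only [Pi.add_apply, Real.norm_eq_abs]
    rw [abs_of_nonneg (sq_nonneg _)]
    exact aux_sq_le r hr.le _
  have iξη : Integrable (fun ω => ξs ω * ηs ω) μ := by
    apply Integrable.mono' ((iξs2.add iηs2).const_mul (1/2))
      ((hξsm.mul hηsm).aestronglyMeasurable)
    filter_upwards with ω
    simp only [Pi.add_apply, Real.norm_eq_abs]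
    rw [Pi.mul_apply, abs_mul]
    nlinarith [sq_nonneg (|ξs ω| - |ηs ω|), sq_abs (ξs ω), sq_abs (ηs ω)]
  have iZ2 : Integrable (fun ω => (Z ω) ^ 2) μ := by
    have e : (fun ω => (Z ω)^2)
        = fun ω => t^2 * (ξs ω)^2 + ((2*t) * (ξs ω * ηs ω) + (ηs ω)^2) := by
      funext ω; simp only [hZ]; ring
    rw [e]
    exact (iξs2.const_mul _).add ((iξη.const_mul _).add iηs2)
  have hZbound : ∀ ω, |Z ω| ^ r ≤ 2^(r-1) * (|t|^r * |ξs ω|^r + |ηs ω|^r) := by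
    intro ω
    have h : |Z ω| ^ r ≤ 2^(r-1) * (|t * ξs ω|^r + |ηs ω|^r) := by
      simp only [hZ]
      have h := key2 (t * ξs ω) (-(ηs ω))
      simpa [sub_neg_eq_add, abs_neg] using h
    rwa [abs_mul, Real.mul_rpow (abs_nonneg _) (abs_nonneg _)] at h
  have iZr : Integrable (fun ω => |Z ω| ^ r) μ := by
    apply Integrable.mono' (((iξsr.const_mul (|t|^r)).add iηsr).const_mul (2^(r-1)))
      (habs.measurable.comp hZm).aestronglyMeasurable
    filter_upwards with ω
    simp only [Function.comp_apply, Pi.add_apply, Real.norm_eq_abs]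
    rw [abs_of_nonneg (Real.rpow_nonneg (abs_nonneg _) _)]
    exact hZbound ω
  -- Step 4 : moment identities and bounds
  set A := ∫ ω, (ξs ω) ^ 2 ∂μ with hA
  set B := ∫ ω, (ηs ω) ^ 2 ∂μ with hB
  set P := ∫ ω, |ξs ω| ^ r ∂μ with hP
  set Q := ∫ ω, |ηs ω| ^ r ∂μ with hQ
  set R := ∫ ω, |Z ω| ^ r ∂μ with hR
  have hAnn : 0 ≤ A := integral_nonneg fun ω => sq_nonneg _
  have hBnn : 0 ≤ B := integral_nonneg fun ω => sq_nonneg _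
  have hSnn : 0 ≤ t^2 * A + B := by positivity
  have hZ2eq : ∫ ω, (Z ω) ^ 2 ∂μ = t^2 * A + B := by
    have e : (fun ω => (Z ω)^2)
        = fun ω => t^2 * (ξs ω)^2 + ((2*t) * (ξs ω * ηs ω) + (ηs ω)^2) := by
      funext ω; simp only [hZ]; ring
    have ia : Integrable (fun ω => 2*t*(ξs ω * ηs ω) + (ηs ω)^2) μ :=
      (iξη.const_mul _).add iηs2
    rw [e, integral_add (iξs2.const_mul (t^2)) ia,
      integral_add (iξη.const_mul (2*t)) iηs2, integral_const_mul, integral_const_mul, h2]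
    ring
  have hRle : R ≤ 2^(r-1) * (|t|^r * P + Q) := by
    rw [hR]
    calc (∫ ω, |Z ω| ^ r ∂μ)
        ≤ ∫ ω, 2^(r-1) * (|t|^r * |ξs ω|^r + |ηs ω|^r) ∂μ :=
          integral_mono iZr (((iξsr.const_mul (|t|^r)).add iηsr).const_mul (2^(r-1))) hZbound
      _ = 2^(r-1) * (|t|^r * P + Q) := by
          rw [integral_const_mul, integral_add (iξsr.const_mul _) iηsr, integral_const_mul]
  set c : ℝ := (7/12) * (2:ℝ)^(-r) with hc
  have hcr : c ≤ 7/48 := by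
    have h4 : (2:ℝ)^(-r) ≤ (2:ℝ)^(-2:ℝ) :=
      Real.rpow_le_rpow_of_exponent_le one_le_two (by linarith)
    have h5 : (2:ℝ)^(-2:ℝ) = 1/4 := by
      rw [show (-2:ℝ) = ((-2:ℤ):ℝ) by norm_num, Real.rpow_intCast]
      norm_num
    rw [h5] at h4
    rw [hc]
    linarith
  have htP : |t|^r * P = t^2 * (|t|^(r-2) * P) := by
    rw [aux_abs_split hr t]; ring
  have hRle2 : R ≤ 2^(r-1) * (c * (t^2 * A + B)) := by
    have e1 : |t|^r * P + Q ≤ c * (t^2 * A + B) := by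
      have e2 : |t|^r * P ≤ t^2 * (c * A) := by
        rw [htP]
        exact mul_le_mul_of_nonneg_left h1 (sq_nonneg t)
      have e3 : Q ≤ c * B := h3
      nlinarith
    have h6 : (0:ℝ) ≤ (2:ℝ)^(r-1) := by positivity
    calc R ≤ 2^(r-1) * (|t|^r * P + Q) := hRle
      _ ≤ 2^(r-1) * (c * (t^2 * A + B)) := mul_le_mul_of_nonneg_left e1 h6
  -- Step 5 : the pointwise lower bound, integrated
  have hmono : 9/32 * (∫ ω, (Z ω) ^ 2 ∂μ) - (9/32 * (2:ℝ)^(2-r)) * R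
      ≤ ∫ ω, (1 - Real.cos (Z ω)) ∂μ := by
    have e : ∫ ω, (9/32 * (Z ω)^2 - (9/32 * (2:ℝ)^(2-r)) * |Z ω|^r) ∂μ
        = 9/32 * (∫ ω, (Z ω) ^ 2 ∂μ) - (9/32 * (2:ℝ)^(2-r)) * R := by
      rw [integral_sub (iZ2.const_mul _) (iZr.const_mul _), integral_const_mul,
        integral_const_mul]
    rw [← e]
    have il : Integrable (fun ω => 9/32 * (Z ω)^2 - (9/32 * (2:ℝ)^(2-r)) * |Z ω|^r) μ :=
      (iZ2.const_mul _).sub (iZr.const_mul _)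
    have ir : Integrable (fun ω => 1 - Real.cos (Z ω)) μ := (integrable_const 1).sub icos
    apply integral_mono il ir
    intro ω
    have h := aux_pointwise hr (Z ω)
    show 9/32 * (Z ω)^2 - (9/32 * (2:ℝ)^(2-r)) * |Z ω|^r ≤ 1 - Real.cos (Z ω)
    linarith [h]
  -- Step 6 : putting everything together
  have e2 : (2:ℝ)^(2-r) * (2:ℝ)^(r-1) = 2 := by
    rw [← Real.rpow_add two_pos, show (2-r) + (r-1) = (1:ℝ) by ring, Real.rpow_one]
  have hcoef : (0:ℝ) ≤ 9/32 * (2:ℝ)^(2-r) := by positivity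
  have bound1 : (9/32 * (2:ℝ)^(2-r)) * R
      ≤ (9/32 * (2:ℝ)^(2-r)) * (2^(r-1) * (c * (t^2 * A + B))) :=
    mul_le_mul_of_nonneg_left hRle2 hcoef
  have eq1 : (9/32 * (2:ℝ)^(2-r)) * ((2:ℝ)^(r-1) * (c * (t^2 * A + B)))
      = 9/16 * (c * (t^2 * A + B)) := by
    rw [show (9/32 * (2:ℝ)^(2-r)) * ((2:ℝ)^(r-1) * (c * (t^2 * A + B)))
        = 9/32 * ((2:ℝ)^(2-r) * (2:ℝ)^(r-1)) * (c * (t^2 * A + B)) by ring, e2]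
    ring
  have bound2 : c * (t^2 * A + B) ≤ 7/48 * (t^2 * A + B) :=
    mul_le_mul_of_nonneg_right hcr hSnn
  rw [← step2] at hmono
  rw [hZ2eq] at hmono
  have b3 : (9/32 * (2:ℝ)^(2-r)) * R ≤ 9/16 * (7/48 * (t^2 * A + B)) := by
    calc (9/32 * (2:ℝ)^(2-r)) * R
        ≤ (9/32 * (2:ℝ)^(2-r)) * (2^(r-1) * (c * (t^2 * A + B))) := bound1
      _ = 9/16 * (c * (t^2 * A + B)) := eq1
      _ ≤ 9/16 * (7/48 * (t^2 * A + B)) := by linarith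
  linarith
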